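/- Define M(n) as the smallest positive integer such that |C(X)| ≤ M(n) for every ultrametric space (X,d) with |X| = n. Then M is monotone: M(n₁) ≤ M(n₂) whenever n₁ ≤ n₂ are positive integers. -/

import Mathlib

/-!
Given an ultrametric space `X` with `n₁ ≥ 1` points and `n₂ ≥ n₁`, choose a surjection `f` from an
`n₂`-point set `Y` onto `X` and `0 < ε` below every nonzero distance of `X`. Setting
`d(y, z) = max ε (dist (f y) (f z))` for `y ≠ z` makes `Y` an ultrametric space in which every
nonzero distance of `X` is still realised from every point, so `C(X) ⊆ C(Y)` and `|C(X)| ≤ M(n₂)`.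
-/

/-- The center of distances of a metric space. -/
def centerOfDistances (X : Type*) [MetricSpace X] : Set ℝ :=
  {t : ℝ | ∀ p : X, ∃ x : X, dist p x = t}

/-- `m` is a positive integer bounding `|C(X)|` for every ultrametric space with `n` points. -/
def IsCenterBound (n m : ℕ) : Prop :=
  0 < m ∧ ∀ (X : Type) (_ : MetricSpace X) (_ : Fintype X),
    IsUltrametricDist X → Fintype.card X = n → (centerOfDistances X).ncard ≤ m

theorem centerOfDistances_finite (X : Type*) [MetricSpace X] [Finite X] [Nonempty X] :
    (centerOfDistances X).Finite :=
  (Set.finite_range (dist (Classical.arbitrary X))).subset fun _ ht ↦ ht _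

theorem exists_pos_le_dist_of_finite (X : Type*) [MetricSpace X] [Finite X] :
    ∃ ε > 0, ∀ x y : X, x ≠ y → ε ≤ dist x y := by
  obtain ⟨C, hC, hle⟩ := (Set.univ : Set X).toFinite.relatively_discrete
  have hmin_ne_top : min 1 C ≠ ⊤ := (min_le_left 1 C).trans_lt ENNReal.one_lt_top |>.ne
  refine ⟨(min 1 C).toReal, ENNReal.toReal_pos (lt_min one_pos hC).ne' hmin_ne_top, ?_⟩
  intro x y hxy
  rw [dist_edist]
  exact ENNReal.toReal_mono (edist_ne_top x y)
    ((min_le_right 1 C).trans (hle x trivial y trivial hxy))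

section Inflate

variable {X Y : Type*} [PseudoMetricSpace X]

open scoped Classical in
noncomputable def inflatedDist (f : Y → X) (ε : ℝ) (y z : Y) : ℝ :=
  if y = z then 0 else max ε (dist (f y) (f z))

variable (f : Y → X) {ε : ℝ}

@[simp]
theorem inflatedDist_self (y : Y) : inflatedDist f ε y y = 0 := if_pos rfl

theorem inflatedDist_of_ne {y z : Y} (h : y ≠ z) :
    inflatedDist f ε y z = max ε (dist (f y) (f z)) := if_neg h

theorem inflatedDist_comm (y z : Y) : inflatedDist f ε y z = inflatedDist f ε z y := by
  by_cases h : y = z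
  · rw [h]
  · rw [inflatedDist_of_ne f h, inflatedDist_of_ne f (Ne.symm h), dist_comm]

theorem inflatedDist_nonneg (hε : 0 ≤ ε) (y z : Y) : 0 ≤ inflatedDist f ε y z := by
  by_cases h : y = z
  · rw [h, inflatedDist_self]
  · rw [inflatedDist_of_ne f h]
    exact hε.trans (le_max_left _ _)

theorem inflatedDist_pos (hε : 0 < ε) {y z : Y} (h : y ≠ z) : 0 < inflatedDist f ε y z := by
  rw [inflatedDist_of_ne f h]
  exact hε.trans_le (le_max_left _ _)

theorem inflatedDist_triangle (hε : 0 ≤ ε) (y w z : Y) :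
    inflatedDist f ε y z ≤ inflatedDist f ε y w + inflatedDist f ε w z := by
  by_cases hyz : y = z
  · rw [hyz, inflatedDist_self]
    exact add_nonneg (inflatedDist_nonneg f hε _ _) (inflatedDist_nonneg f hε _ _)
  by_cases hwy : w = y
  · rw [hwy, inflatedDist_self, zero_add]
  by_cases hwz : w = z
  · rw [hwz, inflatedDist_self, add_zero]
  rw [inflatedDist_of_ne f hyz, inflatedDist_of_ne f (Ne.symm hwy), inflatedDist_of_ne f hwz]
  refine max_le ((le_max_left _ _).trans (le_add_of_nonneg_right (hε.trans (le_max_left _ _)))) ?_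
  calc dist (f y) (f z) ≤ dist (f y) (f w) + dist (f w) (f z) := dist_triangle _ _ _
    _ ≤ max ε (dist (f y) (f w)) + max ε (dist (f w) (f z)) :=
      add_le_add (le_max_right _ _) (le_max_right _ _)

theorem inflatedDist_le_max [IsUltrametricDist X] (hε : 0 ≤ ε) (y w z : Y) :
    inflatedDist f ε y z ≤ max (inflatedDist f ε y w) (inflatedDist f ε w z) := by
  by_cases hyz : y = z
  · rw [hyz, inflatedDist_self]
    exact le_max_of_le_left (inflatedDist_nonneg f hε z w)
  by_cases hwy : w = y
  · rw [hwy, inflatedDist_self]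
    exact le_max_right _ _
  by_cases hwz : w = z
  · rw [hwz, inflatedDist_self]
    exact le_max_left _ _
  rw [inflatedDist_of_ne f hyz, inflatedDist_of_ne f (Ne.symm hwy), inflatedDist_of_ne f hwz,
    max_max_max_comm, max_self]
  exact max_le_max_left ε (IsUltrametricDist.dist_triangle_max _ _ _)

@[reducible]
noncomputable def inflatedMetricSpace (hε : 0 < ε) : MetricSpace Y where
  dist := inflatedDist f ε
  dist_self := inflatedDist_self f
  dist_comm := inflatedDist_comm f
  dist_triangle := inflatedDist_triangle f hε.le
  eq_of_dist_eq_zero {y z} h := by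
    by_contra hyz
    exact (inflatedDist_pos f hε hyz).ne' h

end Inflate

theorem exists_isUltrametricDist_centerOfDistances_subset {X Y : Type*} [MetricSpace X] [Finite X]
    [IsUltrametricDist X] {f : Y → X} (hf : Function.Surjective f) :
    ∃ _ : MetricSpace Y, IsUltrametricDist Y ∧ centerOfDistances X ⊆ centerOfDistances Y := by
  obtain ⟨ε, hε, hε_le⟩ := exists_pos_le_dist_of_finite X
  let _ := inflatedMetricSpace f hε
  refine ⟨inferInstance, ⟨inflatedDist_le_max f hε.le⟩, fun t ht p ↦ ?_⟩
  obtain ⟨x, rfl⟩ := ht (f p)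
  by_cases hx : f p = x
  · exact ⟨p, by rw [hx, dist_self, dist_self]⟩
  obtain ⟨y, rfl⟩ := hf x
  have hpy : p ≠ y := fun h ↦ hx (congrArg f h)
  exact ⟨y, (inflatedDist_of_ne f hpy).trans (max_eq_right (hε_le _ _ hx))⟩

theorem IsCenterBound.of_le {n₁ n₂ m : ℕ} (hm : IsCenterBound n₂ m) (hn₁ : 1 ≤ n₁)
    (hn : n₁ ≤ n₂) : IsCenterBound n₁ m := by
  refine ⟨hm.1, fun X _ _ hX hcard ↦ ?_⟩
  have : Nonempty X := Fintype.card_pos_iff.mp (by omega)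
  obtain ⟨e⟩ := Function.Embedding.nonempty_of_card_le (α := X) (β := Fin n₂) (by simpa [hcard])
  have : Nonempty (Fin n₂) := ⟨e (Classical.arbitrary X)⟩
  obtain ⟨_, hY, hsub⟩ :=
    exists_isUltrametricDist_centerOfDistances_subset (Function.invFun_surjective e.injective)
  exact (Set.ncard_le_ncard hsub (centerOfDistances_finite _)).trans
    (hm.2 _ _ _ hY (Fintype.card_fin n₂))

/-- The function `M`, assigning to `n` the least positive integer bounding the size of
the center of distances of all `n`-point ultrametric spaces, is monotone. -/
theorem M_monotone (n₁ n₂ m₁ m₂ : ℕ) (hn₁ : 1 ≤ n₁) (hn : n₁ ≤ n₂)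
    (hm₁ : IsLeast {m : ℕ | IsCenterBound n₁ m} m₁)
    (hm₂ : IsLeast {m : ℕ | IsCenterBound n₂ m} m₂) :
    m₁ ≤ m₂ :=
  hm₁.2 (hm₂.1.of_le hn₁ hn)
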